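/- With the appendix construction: if for every subset 𝕐' ⊆ 𝕐 with |𝕐'| ≤ n there exists a 0-1 assignment (y,z) of 𝕐 ∪ ℤ that sets all variables of 𝕐' to 0 and satisfies ϝ, then for every 0-1 assignment p of ℙ there exists a 0-1 assignment q of ℚ such that Ψ(p,q) is satisfied. -/
import Mathlib


namespace Appendix

/-- Variables of the `∀∃3CNF-SAT` instance: `Sum.inl j` is `p_j ∈ ℙ`,
`Sum.inr j` is `q_j ∈ ℚ`. -/
abbrev PQ (n : ℕ) := Fin n ⊕ Fin n

/-- Variables of the constructed `∀(Γ)∃CNF-SAT` instance: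
`𝕐 = {yP j, yN j}` and `ℤ = {z j} ∪ {sj j} ∪ {s}`. -/
inductive NewVar (n : ℕ) where
  | yP : Fin n → NewVar n
  | yN : Fin n → NewVar n
  | z : Fin n → NewVar n
  | sj : Fin n → NewVar n
  | s : NewVar n
deriving DecidableEq

/-- A CNF formula, given as a list of clauses, each clause being a list of
literals (a variable with a polarity; `true` = positive literal).  An
assignment satisfies it if every clause contains a true literal. -/
def Satisfies {V : Type*} (F : List (List (V × Bool))) (a : V → Bool) : Prop :=
  ∀ C ∈ F, ∃ l ∈ C, a l.1 = l.2

/-- Translation of literals: `p_j ↦ yP j`, `¬p_j ↦ yN j` (both becoming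
positive literals), `q_j ↦ z j`, `¬q_j ↦ ¬ z j`. -/
def trLit {n : ℕ} : PQ n × Bool → NewVar n × Bool
  | (Sum.inl j, true) => (.yP j, true)
  | (Sum.inl j, false) => (.yN j, true)
  | (Sum.inr j, b) => (.z j, b)

/-- The formula `Ψ'` obtained from `Ψ` by translating every literal. -/
def Psi' {n : ℕ} (Ψ : List (List (PQ n × Bool))) : List (List (NewVar n × Bool)) :=
  Ψ.map fun C => C.map trLit

/-- The constructed formula `ϝ`: the clauses `(C'_i ∨ s)` for `i ∈ [m]`,
the clauses `(yP j ∨ ¬ sj j)` and `(yN j ∨ ¬ sj j)` for `j ∈ [n]`, and the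
clause `(¬ s ∨ sj 1 ∨ ⋯ ∨ sj n)`. -/
def digammaF {n : ℕ} (Ψ : List (List (PQ n × Bool))) : List (List (NewVar n × Bool)) :=
  (Ψ.map fun C => C.map trLit ++ [(NewVar.s, true)]) ++
  ((List.finRange n).map fun j => [(NewVar.yP j, true), (NewVar.sj j, false)]) ++
  ((List.finRange n).map fun j => [(NewVar.yN j, true), (NewVar.sj j, false)]) ++
  [(NewVar.s, false) :: (List.finRange n).map fun j => (NewVar.sj j, true)]

/-- The variable set `𝕐 = {yP j : j ∈ [n]} ∪ {yN j : j ∈ [n]}`. -/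
def Yset (n : ℕ) : Finset (NewVar n) :=
  Finset.univ.image NewVar.yP ∪ Finset.univ.image NewVar.yN

/-- Appendix construction: if for every subset `𝕐' ⊆ 𝕐` with
`|𝕐'| ≤ n` there exists a 0-1 assignment of `𝕐 ∪ ℤ` that sets all variables of
`𝕐'` to 0 and satisfies `ϝ`, then for every 0-1 assignment `p` of `ℙ` there
exists a 0-1 assignment `q` of `ℚ` such that `Ψ(p,q)` is satisfied. -/
theorem stmt4 (n : ℕ) (Ψ : List (List (PQ n × Bool)))
    (h3 : ∀ C ∈ Ψ, C.length = 3)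
    (h : ∀ Y' ⊆ Yset n, Y'.card ≤ n →
      ∃ a : NewVar n → Bool, (∀ v ∈ Y', a v = false) ∧ Satisfies (digammaF Ψ) a) :
    ∀ p : Fin n → Bool, ∃ q : Fin n → Bool, Satisfies Ψ (Sum.elim p q) := by

  intro p
  set Y' : Finset (NewVar n) :=
    Finset.univ.image (fun j => if p j then NewVar.yN j else NewVar.yP j) with hY'
  have hsub : Y' ⊆ Yset n := by
    intro v hv
    simp only [hY', Finset.mem_image, Finset.mem_univ, true_and] at hv
    obtain ⟨j, hj⟩ := hv
    by_cases hp : p j <;> simp [hp] at hj <;>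
      simp [Yset, ← hj]
  have hcard : Y'.card ≤ n := by
    calc Y'.card ≤ (Finset.univ : Finset (Fin n)).card := Finset.card_image_le
      _ = n := by simp
  obtain ⟨a, hzero, hsat⟩ := h Y' hsub hcard
  -- a s = false
  have hyPfalse : ∀ j, p j = false → a (NewVar.yP j) = false := by
    intro j hpj
    apply hzero
    simp only [hY', Finset.mem_image, Finset.mem_univ, true_and]
    exact ⟨j, by simp [hpj]⟩
  have hyNfalse : ∀ j, p j = true → a (NewVar.yN j) = false := by
    intro j hpj
    apply hzero
    simp only [hY', Finset.mem_image, Finset.mem_univ, true_and]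
    exact ⟨j, by simp [hpj]⟩
  have hs : a NewVar.s = false := by
    by_contra hs
    rw [Bool.not_eq_false] at hs
    have hmem : ((NewVar.s, false) :: (List.finRange n).map fun j => (NewVar.sj j, true))
        ∈ digammaF Ψ := by
      simp [digammaF]
    obtain ⟨l, hl, hal⟩ := hsat _ hmem
    simp only [List.mem_cons, List.mem_map, List.mem_finRange] at hl
    rcases hl with rfl | ⟨j, _, rfl⟩
    · simp [hs] at hal
    · -- a (sj j) = true
      have hP : a (NewVar.yP j) = true := by
        have hmemP : [(NewVar.yP j, true), (NewVar.sj j, false)] ∈ digammaF Ψ := by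
          simp [digammaF]
        obtain ⟨l, hl, hal2⟩ := hsat _ hmemP
        simp only [List.mem_cons, List.mem_singleton, List.not_mem_nil, or_false] at hl
        rcases hl with rfl | rfl
        · exact hal2
        · simp at hal2; rw [hal2] at hal; exact absurd hal (by simp)
      have hN : a (NewVar.yN j) = true := by
        have hmemN : [(NewVar.yN j, true), (NewVar.sj j, false)] ∈ digammaF Ψ := by
          simp [digammaF]
        obtain ⟨l, hl, hal2⟩ := hsat _ hmemN
        simp only [List.mem_cons, List.mem_singleton, List.not_mem_nil, or_false] at hl
        rcases hl with rfl | rfl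
        · exact hal2
        · simp at hal2; rw [hal2] at hal; exact absurd hal (by simp)
      cases hp : p j
      · rw [hyPfalse j hp] at hP; exact absurd hP (by simp)
      · rw [hyNfalse j hp] at hN; exact absurd hN (by simp)
  refine ⟨fun j => a (NewVar.z j), ?_⟩
  intro C hC
  have hmem : C.map trLit ++ [(NewVar.s, true)] ∈ digammaF Ψ := by
    simp only [digammaF, List.mem_append]
    exact Or.inl (Or.inl (Or.inl (List.mem_map.2 ⟨C, hC, rfl⟩)))
  obtain ⟨l, hl, hal⟩ := hsat _ hmem
  rw [List.mem_append] at hl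
  rcases hl with hl | hl
  · obtain ⟨l', hl', rfl⟩ := List.mem_map.1 hl
    refine ⟨l', hl', ?_⟩
    obtain ⟨v, b⟩ := l'
    rcases v with j | j
    · cases b
      · simp only [trLit] at hal
        cases hp : p j
        · simpa using hp
        · rw [hyNfalse j hp] at hal; exact absurd hal (by simp)
      · simp only [trLit] at hal
        cases hp : p j
        · rw [hyPfalse j hp] at hal; exact absurd hal (by simp)
        · simpa using hp
    · simpa [trLit] using hal
  · simp only [List.mem_singleton] at hl
    subst hl
    rw [hs] at hal
    exact absurd hal (by simp)


end Appendix
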